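/- arXiv:2103.12559 — 6 statements merged into one kernel-verified Lean document; each statement's English description precedes it below -/
import Mathlib

section
/- Let α ∈ (0,1) and let 0 < γ < Γ(α+1), where Γ is the Euler Gamma function. Then the sequence of coefficients c̃_r = γ^r / Γ(αr + 1), r = 0, 1, 2, …, is strictly monotonically decreasing in r. -/
open Real

lemma gamma_ratio_le {x y a : ℝ} (hx : 0 < x) (hxy : x ≤ y) (ha : 0 ≤ a) :
    Real.Gamma (x + a) * Real.Gamma y ≤ Real.Gamma x * Real.Gamma (y + a) := by
  rcases eq_or_lt_of_le hxy with rfl | hxy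
  · ring_nf; exact le_rfl
  rcases eq_or_lt_of_le ha with rfl | ha
  · ring_nf; exact le_rfl
  have hy : 0 < y := hx.trans hxy
  have hxa : 0 < x + a := by linarith
  have hya : 0 < y + a := by linarith
  have hD : 0 < y + a - x := by linarith
  set t : ℝ := a / (y + a - x) with ht
  set s : ℝ := (y - x) / (y + a - x) with hs
  have hts : s + t = 1 := by rw [hs, ht]; field_simp; ring
  have ht0 : 0 ≤ t := div_nonneg ha.le hD.le
  have hs0 : 0 ≤ s := div_nonneg (by linarith) hD.le
  have hcvx := Real.convexOn_log_Gamma.2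
  have hc1 : s * x + t * (y + a) = x + a := by rw [hs, ht]; field_simp; ring
  have hc2 : t * x + s * (y + a) = y := by rw [hs, ht]; field_simp; ring
  have h1 : Real.log (Real.Gamma (x + a)) ≤
      s * Real.log (Real.Gamma x) + t * Real.log (Real.Gamma (y + a)) := by
    have := hcvx (Set.mem_Ioi.mpr hx) (Set.mem_Ioi.mpr hya) hs0 ht0 hts
    simp only [Function.comp_apply, smul_eq_mul] at this
    rwa [hc1] at this
  have h2 : Real.log (Real.Gamma y) ≤
      t * Real.log (Real.Gamma x) + s * Real.log (Real.Gamma (y + a)) := by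
    have := hcvx (Set.mem_Ioi.mpr hx) (Set.mem_Ioi.mpr hya) ht0 hs0 (by linarith)
    simp only [Function.comp_apply, smul_eq_mul] at this
    rwa [hc2] at this
  have hGx := Real.Gamma_pos_of_pos hx
  have hGy := Real.Gamma_pos_of_pos hy
  have hGxa := Real.Gamma_pos_of_pos hxa
  have hGya := Real.Gamma_pos_of_pos hya
  rw [← Real.log_le_log_iff (by positivity) (by positivity),
    Real.log_mul (by positivity) (by positivity),
    Real.log_mul (by positivity) (by positivity)]
  have heq : s * Real.log (Real.Gamma x) + t * Real.log (Real.Gamma (y + a)) +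
      (t * Real.log (Real.Gamma x) + s * Real.log (Real.Gamma (y + a))) =
      (s + t) * (Real.log (Real.Gamma x) + Real.log (Real.Gamma (y + a))) := by ring
  rw [hts, one_mul] at heq
  linarith

/-- Let α ∈ (0,1) and 0 < γ < Γ(α+1). Then the sequence of coefficients
c̃_r = γ^r / Γ(αr + 1) is strictly monotonically decreasing in r. -/
theorem ml_coefficients_strictAnti (α γ : ℝ) (hα : α ∈ Set.Ioo (0 : ℝ) 1)
    (hγ0 : 0 < γ) (hγ : γ < Real.Gamma (α + 1)) :
    StrictAnti (fun r : ℕ => γ ^ r / Real.Gamma (α * r + 1)) := by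
  obtain ⟨hα0, hα1⟩ := hα
  apply strictAnti_nat_of_succ_lt
  intro r
  have hr : (0:ℝ) ≤ (r:ℝ) := Nat.cast_nonneg r
  have h1 : (0:ℝ) < α * r + 1 := by positivity
  have h2 : (0:ℝ) < α * (r + 1) + 1 := by positivity
  have hG1 := Real.Gamma_pos_of_pos h1
  have hG2 := Real.Gamma_pos_of_pos h2
  have key : Real.Gamma (α + 1) * Real.Gamma (α * r + 1) ≤
      Real.Gamma (α * (r + 1) + 1) := by
    have := gamma_ratio_le (x := 1) (y := α * r + 1) (a := α)
      one_pos (by nlinarith) hα0.le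
    rw [Real.Gamma_one] at this
    calc Real.Gamma (α + 1) * Real.Gamma (α * r + 1)
        = Real.Gamma (1 + α) * Real.Gamma (α * r + 1) := by rw [add_comm]
      _ ≤ 1 * Real.Gamma (α * r + 1 + α) := this
      _ = Real.Gamma (α * (r + 1) + 1) := by rw [one_mul]; ring_nf
  push_cast
  rw [div_lt_div_iff₀ hG2 hG1]
  calc γ ^ (r + 1) * Real.Gamma (α * r + 1)
      = γ ^ r * (γ * Real.Gamma (α * r + 1)) := by ring
    _ < γ ^ r * (Real.Gamma (α + 1) * Real.Gamma (α * r + 1)) := by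
        apply mul_lt_mul_of_pos_left _ (by positivity)
        exact mul_lt_mul_of_pos_right hγ hG1
    _ ≤ γ ^ r * Real.Gamma (α * (r + 1) + 1) := by
        apply mul_le_mul_of_nonneg_left key (by positivity)
end

section
/- Let α > 0. The function x ↦ Γ(αx + α + 1) / Γ(αx + 1) is monotone nondecreasing on [0, ∞), where Γ is the Euler Gamma function. -/
/-- Let α > 0. The function x ↦ Γ(αx + α + 1) / Γ(αx + 1) is monotone
nondecreasing on [0, ∞). -/
theorem gamma_ratio_monotoneOn (α : ℝ) (hα : 0 < α) :
    MonotoneOn (fun x : ℝ => Real.Gamma (α * x + α + 1) / Real.Gamma (α * x + 1))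
      (Set.Ici (0 : ℝ)) := by
  intro s hs t ht hst
  simp only [Set.mem_Ici] at hs ht
  set a := α * s + 1 with ha_def
  set b := α * t + 1 with hb_def
  have ha0 : (0:ℝ) < a := by nlinarith
  have hb0 : (0:ℝ) < b := by nlinarith
  have hab : a ≤ b := by nlinarith
  have ha0' : (0:ℝ) < a + α := by linarith
  have hb0' : (0:ℝ) < b + α := by linarith
  have haS : a ∈ Set.Ioi (0:ℝ) := ha0
  have hbS : b ∈ Set.Ioi (0:ℝ) := hb0
  have haS' : a + α ∈ Set.Ioi (0:ℝ) := ha0'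
  have hbS' : b + α ∈ Set.Ioi (0:ℝ) := hb0'
  have hconv := Real.convexOn_log_Gamma
  set f : ℝ → ℝ := Real.log ∘ Real.Gamma with hf
  have key : (f (a + α) - f a) / α ≤ (f (b + α) - f b) / α := by
    rcases eq_or_lt_of_le hab with heq | hab'
    · rw [heq]
    · have h1 : (f (a + α) - f a) / (a + α - a) ≤ (f (b + α) - f a) / (b + α - a) :=
        hconv.secant_mono haS haS' hbS' (by intro h; nlinarith [congrArg id h])
          (by intro h; nlinarith [congrArg id h]) (by linarith)
      have h2 : (f a - f (b + α)) / (a - (b + α)) ≤ (f b - f (b + α)) / (b - (b + α)) :=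
        hconv.secant_mono hbS' haS hbS (by intro h; nlinarith [congrArg id h])
          (by intro h; nlinarith [congrArg id h]) hab
      have e1 : a + α - a = α := by ring
      rw [e1] at h1
      have h2' : (f (b + α) - f a) / (b + α - a) ≤ (f (b + α) - f b) / α := by
        have e2 : (f (b + α) - f a) / (b + α - a) = (f a - f (b + α)) / (a - (b + α)) := by
          rw [← neg_div_neg_eq]; ring_nf
        have e3 : (f (b + α) - f b) / α = (f b - f (b + α)) / (b - (b + α)) := by
          rw [← neg_div_neg_eq]; ring_nf
        rw [e2, e3]; exact h2
      linarith
  have key2 : f (a + α) - f a ≤ f (b + α) - f b :=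
    (div_le_div_iff_of_pos_right hα).mp key
  have hga : 0 < Real.Gamma a := Real.Gamma_pos_of_pos ha0
  have hgb : 0 < Real.Gamma b := Real.Gamma_pos_of_pos hb0
  have hga' : 0 < Real.Gamma (a + α) := Real.Gamma_pos_of_pos ha0'
  have hgb' : 0 < Real.Gamma (b + α) := Real.Gamma_pos_of_pos hb0'
  have hlog : Real.log (Real.Gamma (a + α) / Real.Gamma a)
      ≤ Real.log (Real.Gamma (b + α) / Real.Gamma b) := by
    rw [Real.log_div hga'.ne' hga.ne', Real.log_div hgb'.ne' hgb.ne']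
    exact key2
  have hfin : Real.Gamma (a + α) / Real.Gamma a ≤ Real.Gamma (b + α) / Real.Gamma b :=
    (Real.log_le_log_iff (div_pos hga' hga) (div_pos hgb' hgb)).mp hlog
  have eas : α * s + α + 1 = a + α := by rw [ha_def]; ring
  have eat : α * t + α + 1 = b + α := by rw [hb_def]; ring
  simpa only [eas, eat] using hfin
end

section
/- Let A be a real n×n matrix and γ > 0 be such that the operator norm satisfies γ‖A‖ < 1. Then as α → 0⁺ the matrix Mittag–Leffler function converges to the resolvent: lim_{α→0⁺} Σ_{r=0}^∞ γ^r A^r / Γ(αr + 1) = (I − γA)^{−1}. -/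
open Filter
open scoped Matrix.Norms.L2Operator

lemma gamma_lower_bound : ∃ m : ℝ, 0 < m ∧ m ≤ 1 ∧ ∀ x : ℝ, 1 ≤ x → m ≤ Real.Gamma x := by
  have hcont : ContinuousOn Real.Gamma (Set.Icc (1:ℝ) 2) := by
    intro x hx
    have hx1 : (1:ℝ) ≤ x := hx.1
    exact ((Real.differentiableAt_Gamma fun m => ne_of_gt (by
      have : (0:ℝ) ≤ m := Nat.cast_nonneg m
      linarith)).continuousAt).continuousWithinAt
  obtain ⟨x₀, hx₀, hmin⟩ := isCompact_Icc.exists_isMinOn (Set.nonempty_Icc.2 one_le_two) hcont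
  refine ⟨min (Real.Gamma x₀) 1, ?_, min_le_right _ _, ?_⟩
  · exact lt_min (Real.Gamma_pos_of_pos (by linarith [hx₀.1])) one_pos
  intro x hx
  rcases le_or_gt x 2 with hx2 | hx2
  · exact le_trans (min_le_left _ _) (hmin ⟨hx, hx2⟩)
  · refine le_trans (min_le_right _ _) ?_
    have hx1 : (1:ℝ) < x := by linarith
    set a : ℝ := (x - 2) / (x - 1) with ha_def
    set b : ℝ := 1 / (x - 1) with hb_def
    have hxm : (0:ℝ) < x - 1 := by linarith
    have ha : 0 ≤ a := div_nonneg (by linarith) (by linarith)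
    have hb : 0 < b := by positivity
    have hab : a + b = 1 := by
      rw [ha_def, hb_def, ← add_div]
      have hxx : x - 2 + 1 = x - 1 := by ring
      rw [hxx, div_self hxm.ne']
    have hc := Real.convexOn_Gamma.2 (Set.mem_Ioi.2 one_pos)
      (Set.mem_Ioi.2 (by linarith : (0:ℝ) < x)) ha hb.le hab
    have hpt : a • (1:ℝ) + b • x = 2 := by
      simp only [smul_eq_mul, mul_one, ha_def, hb_def]; field_simp; ring
    rw [hpt, Real.Gamma_two, Real.Gamma_one] at hc
    simp only [smul_eq_mul, mul_one] at hc
    nlinarith [hc, hb, hab]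

lemma matrix_norm_one_le {n : ℕ} : ‖(1 : Matrix (Fin n) (Fin n) ℝ)‖ ≤ 1 := by
  rw [Matrix.cstar_norm_def, map_one]
  exact ContinuousLinearMap.norm_id_le

lemma matrix_norm_pow_le {n : ℕ} (A : Matrix (Fin n) (Fin n) ℝ) (r : ℕ) :
    ‖A ^ r‖ ≤ ‖A‖ ^ r := by
  induction r with
  | zero => simpa using matrix_norm_one_le
  | succ k ih =>
      calc ‖A ^ (k+1)‖ = ‖A ^ k * A‖ := by rw [pow_succ]
        _ ≤ ‖A ^ k‖ * ‖A‖ := norm_mul_le _ _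
        _ ≤ ‖A‖ ^ k * ‖A‖ := by
            exact mul_le_mul_of_nonneg_right ih (norm_nonneg _)
        _ = ‖A‖ ^ (k+1) := by rw [pow_succ]

/-- Let A be a real n×n matrix and γ > 0 with γ‖A‖ < 1 (operator 2-norm).
Then as α → 0⁺ the matrix Mittag–Leffler function converges to the resolvent:
lim_{α→0⁺} Σ_{r} γ^r A^r / Γ(αr + 1) = (I − γA)⁻¹. -/
theorem ml_matrix_tendsto_resolvent {n : ℕ} (A : Matrix (Fin n) (Fin n) ℝ) (γ : ℝ)
    (hγ : 0 < γ) (h : γ * ‖A‖ < 1) :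
    Tendsto (fun α : ℝ => ∑' r : ℕ, (γ ^ r / Real.Gamma (α * r + 1)) • A ^ r)
      (nhdsWithin 0 (Set.Ioi 0)) (nhds (1 - γ • A)⁻¹) := by
  obtain ⟨m, hm, hm1, hmle⟩ := gamma_lower_bound
  have hA0 : 0 ≤ ‖A‖ := norm_nonneg _
  have hnorm : ‖γ • A‖ < 1 := by
    rw [norm_smul, Real.norm_eq_abs, abs_of_pos hγ]; exact h
  have hlim : (1 - γ • A)⁻¹ = ∑' r : ℕ, (γ • A) ^ r := by
    rw [Matrix.nonsing_inv_eq_ringInverse, NormedRing.inverse_one_sub _ hnorm]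
    rfl
  rw [hlim]
  have hsum : Summable (fun r : ℕ => (γ * ‖A‖) ^ r / m) :=
    (summable_geometric_of_lt_one (by positivity) h).div_const m
  have key := tendsto_tsum_of_dominated_convergence
    (𝓕 := nhdsWithin (0:ℝ) (Set.Ioi 0))
    (f := fun (α : ℝ) (r : ℕ) => (γ ^ r / Real.Gamma (α * r + 1)) • A ^ r)
    (g := fun r : ℕ => (γ • A) ^ r)
    (bound := fun r : ℕ => (γ * ‖A‖) ^ r / m) hsum ?_ ?_
  · exact key
  · intro r
    have h1 : ContinuousAt Real.Gamma 1 :=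
      (Real.differentiableAt_Gamma fun m => ne_of_gt (by
        have : (0:ℝ) ≤ m := Nat.cast_nonneg m
        linarith)).continuousAt
    have h2 : Tendsto (fun α : ℝ => α * r + 1) (nhdsWithin 0 (Set.Ioi 0)) (nhds 1) := by
      have h3 : Tendsto (fun α : ℝ => α * r + 1) (nhds 0) (nhds ((0:ℝ) * r + 1)) :=
        ((continuous_id.mul continuous_const).add continuous_const).tendsto (0:ℝ)
      simpa using h3.mono_left nhdsWithin_le_nhds
    have hΓ : Tendsto (fun α : ℝ => Real.Gamma (α * r + 1)) (nhdsWithin 0 (Set.Ioi 0))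
        (nhds 1) := by
      have := h1.tendsto.comp h2
      simpa [Real.Gamma_one, Function.comp_def] using this
    have hdiv : Tendsto (fun α : ℝ => γ ^ r / Real.Gamma (α * r + 1))
        (nhdsWithin 0 (Set.Ioi 0)) (nhds (γ ^ r)) := by
      simpa [Pi.div_def] using (tendsto_const_nhds (x := γ ^ r)
        (f := nhdsWithin (0:ℝ) (Set.Ioi 0))).div hΓ one_ne_zero
    simpa [smul_pow, smul_smul] using hdiv.smul_const (A ^ r)
  · filter_upwards [self_mem_nhdsWithin] with α hα
    have hα' : 0 < α := hα
    intro r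
    have hr0 : (0:ℝ) ≤ (r:ℝ) := Nat.cast_nonneg r
    have hΓge : m ≤ Real.Gamma (α * r + 1) := hmle _ (by nlinarith)
    have hΓpos : 0 < Real.Gamma (α * r + 1) := lt_of_lt_of_le hm hΓge
    rw [norm_smul, Real.norm_eq_abs, abs_of_pos (by positivity)]
    calc γ ^ r / Real.Gamma (α * r + 1) * ‖A ^ r‖
        ≤ γ ^ r / m * ‖A‖ ^ r := by
          apply mul_le_mul
          · exact div_le_div_of_nonneg_left (by positivity) hm hΓge
          · exact matrix_norm_pow_le A r
          · exact norm_nonneg _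
          · positivity
      _ = (γ * ‖A‖) ^ r / m := by rw [mul_pow]; ring
end

section
/- Let α > 0 and let A be a real n×n matrix with 𝟏 the all-ones vector in ℝⁿ. Then the Mittag–Leffler total communicability vector t(Ẽ_α) = E_α(γA)𝟏 satisfies lim_{γ→0⁺} γ^{−1} (E_α(γA)𝟏 − 𝟏) = Γ(α+1)^{−1} · A𝟏; in particular, to first order in γ the Mittag–Leffler total communicability of node i is 1 + γ d_i / Γ(α+1), where d_i = (A𝟏)_i is the degree of node i. -/
open Filter
open scoped Matrix

set_option maxHeartbeats 1000000

private lemma gamma_ge_one {s : ℝ} (hs : 2 ≤ s) : 1 ≤ Real.Gamma s := by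
  rcases eq_or_lt_of_le hs with h | h
  · rw [← h, Real.Gamma_two]
  · have key := Real.convexOn_Gamma.slope_mono_adjacent (x := 1) (y := 2) (z := s)
      (Set.mem_Ioi.mpr one_pos) (Set.mem_Ioi.mpr (by linarith)) (by norm_num) h
    rw [Real.Gamma_one, Real.Gamma_two] at key
    norm_num at key
    rcases div_nonneg_iff.mp key with ⟨h1, _⟩ | ⟨_, h2⟩
    · linarith
    · linarith

private lemma gamma_mono {s t : ℝ} (hs : 2 ≤ s) (hst : s ≤ t) :
    Real.Gamma s ≤ Real.Gamma t := by
  rcases eq_or_lt_of_le hst with h | h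
  · rw [h]
  · have key := Real.convexOn_Gamma.slope_mono_adjacent (x := 1) (y := s) (z := t)
      (Set.mem_Ioi.mpr one_pos) (Set.mem_Ioi.mpr (by linarith)) (by linarith) h
    rw [Real.Gamma_one] at key
    have hL : (0:ℝ) ≤ (Real.Gamma s - 1) / (s - 1) :=
      div_nonneg (by linarith [gamma_ge_one hs]) (by linarith)
    have := le_trans hL key
    rcases div_nonneg_iff.mp this with ⟨h1, _⟩ | ⟨_, h2⟩
    · linarith
    · linarith

private lemma ml_summable {α : ℝ} (hα : 0 < α) {x : ℝ} (hx : 0 ≤ x) :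
    Summable fun r : ℕ => x ^ r / Real.Gamma (α * r + 1) := by
  set y : ℝ := max 1 (x ^ (1/α : ℝ)) with hy
  have hy1 : (1:ℝ) ≤ y := le_max_left _ _
  have hy0 : (0:ℝ) < y := lt_of_lt_of_le one_pos hy1
  have hxy : x ≤ y ^ (α : ℝ) := by
    have h1 : x = (x ^ (1/α : ℝ)) ^ (α : ℝ) := by
      rw [← Real.rpow_mul hx, one_div, inv_mul_cancel₀ hα.ne', Real.rpow_one]
    rw [h1]
    exact Real.rpow_le_rpow (Real.rpow_nonneg hx _) (le_max_right _ _) hα.le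
  set q : ℝ := (1/2 : ℝ) ^ (α : ℝ) with hq
  have hq0 : (0:ℝ) ≤ q := Real.rpow_nonneg (by norm_num) _
  have hq1 : q < 1 := Real.rpow_lt_one (by norm_num) (by norm_num) hα
  -- choose K with (2y)^k/k! < 1 for k ≥ K
  obtain ⟨K, hK⟩ := (FloorSemiring.tendsto_pow_div_factorial_atTop (K := ℝ) (2*y)).eventually
    (gt_mem_nhds one_pos) |>.exists_forall_of_atTop
  have hKb : ∀ k : ℕ, K ≤ k → y ^ k / (k.factorial : ℝ) ≤ (1/2 : ℝ) ^ k := by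
    intro k hk
    have h1 := (hK k hk).le
    have h2 : ((2*y) ^ k : ℝ) = 2 ^ k * y ^ k := by rw [mul_pow]
    have hfac : (0:ℝ) < k.factorial := by exact_mod_cast k.factorial_pos
    rw [div_le_iff₀ hfac] at h1 ⊢
    have : ((1:ℝ)/2) ^ k * (2:ℝ)^k = 1 := by
      rw [← mul_pow]; norm_num
    nlinarith [pow_pos (show (0:ℝ) < 2 by norm_num) k, pow_nonneg hy0.le k,
      pow_pos (show (0:ℝ) < 1/2 by norm_num) k]
  have hto : Tendsto (fun r : ℕ => α * r) atTop atTop :=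
    (tendsto_natCast_atTop_atTop (R := ℝ)).const_mul_atTop hα
  apply Summable.of_norm_bounded_eventually_nat
    (((summable_geometric_of_lt_one hq0 hq1).mul_left (2*y)))
  filter_upwards [hto.eventually_ge_atTop ((K : ℝ) + 2)] with r hr
  set k : ℕ := ⌊α * r⌋₊ with hkdef
  have har : (0:ℝ) ≤ α * r := by positivity
  have hkle : (k : ℝ) ≤ α * r := Nat.floor_le har
  have hklt : α * r < k + 1 := Nat.lt_floor_add_one _
  have hkK : K + 2 ≤ k := by
    have : ((K + 2 : ℕ) : ℝ) ≤ α * r := by push_cast; linarith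
    exact Nat.le_floor this
  have hk2 : (2:ℝ) ≤ (k:ℝ) + 1 := by
    have : (2:ℕ) ≤ k := by omega
    have := Nat.cast_le (α := ℝ).mpr this
    push_cast at this ⊢; linarith
  -- Gamma lower bound
  have hG : (k.factorial : ℝ) ≤ Real.Gamma (α * r + 1) := by
    have h1 : Real.Gamma ((k:ℝ) + 1) ≤ Real.Gamma (α * r + 1) :=
      gamma_mono hk2 (by linarith)
    rw [Real.Gamma_nat_eq_factorial] at h1
    exact h1
  have hGpos : (0:ℝ) < Real.Gamma (α * r + 1) :=
    Real.Gamma_pos_of_pos (by linarith)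
  -- numerator bound
  have hnum : x ^ r ≤ y * y ^ k := by
    calc x ^ r ≤ (y ^ (α:ℝ)) ^ r := pow_le_pow_left₀ hx hxy r
      _ = y ^ (α * r : ℝ) := by
          rw [← Real.rpow_natCast (y ^ (α:ℝ)) r, ← Real.rpow_mul hy0.le]
      _ ≤ y ^ ((k:ℝ) + 1) := Real.rpow_le_rpow_of_exponent_le hy1 (by linarith)
      _ = y * y ^ k := by
          rw [Real.rpow_add hy0, Real.rpow_one, Real.rpow_natCast]; ring
  have hhalf : ((1:ℝ)/2) ^ k ≤ 2 * q ^ r := by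
    calc ((1:ℝ)/2) ^ k = ((1:ℝ)/2) ^ (k:ℝ) := (Real.rpow_natCast _ _).symm
      _ ≤ ((1:ℝ)/2) ^ (α * r - 1 : ℝ) :=
          Real.rpow_le_rpow_of_exponent_ge (by norm_num) (by norm_num) (by linarith)
      _ = 2 * ((1:ℝ)/2) ^ (α * r : ℝ) := by
          rw [Real.rpow_sub (by norm_num), Real.rpow_one]; ring
      _ = 2 * q ^ r := by
          rw [hq, ← Real.rpow_natCast ((1/2 : ℝ) ^ (α:ℝ)) r, ← Real.rpow_mul (by norm_num)]
  have hterm : x ^ r / Real.Gamma (α * r + 1) ≤ y * (2 * q ^ r) := by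
    calc x ^ r / Real.Gamma (α * r + 1) ≤ (y * y ^ k) / (k.factorial : ℝ) := by
          apply div_le_div₀ (by positivity) hnum (by exact_mod_cast k.factorial_pos) hG
      _ = y * (y ^ k / (k.factorial : ℝ)) := by ring
      _ ≤ y * ((1/2 : ℝ) ^ k) := by
          apply mul_le_mul_of_nonneg_left (hKb k (by omega)) hy0.le
      _ ≤ y * (2 * q ^ r) := mul_le_mul_of_nonneg_left hhalf hy0.le
  rw [Real.norm_eq_abs, abs_of_nonneg (by positivity)]
  calc x ^ r / Real.Gamma (α * r + 1) ≤ y * (2 * q ^ r) := hterm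
    _ = 2 * y * q ^ r := by ring

private lemma scalar_limit {α : ℝ} (hα : 0 < α) (w : ℕ → ℝ) (C b : ℝ) (hb : 0 ≤ b)
    (hw : ∀ r, |w r| ≤ C * b ^ r) :
    Tendsto (fun γ : ℝ => γ⁻¹ *
        ((∑' r : ℕ, γ ^ r * ((Real.Gamma (α * r + 1))⁻¹ * w r)) - w 0))
      (nhdsWithin 0 (Set.Ioi 0))
      (nhds ((Real.Gamma (α + 1))⁻¹ * w 1)) := by
  have hC : 0 ≤ C := by have := hw 0; simp at this; exact le_trans (abs_nonneg _) this
  set v : ℕ → ℝ := fun r => (Real.Gamma (α * r + 1))⁻¹ * w r with hv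
  have hΓpos : ∀ r : ℕ, 0 < Real.Gamma (α * r + 1) := fun r =>
    Real.Gamma_pos_of_pos (by positivity)
  have hvb : ∀ (z : ℝ) r, |z ^ r * v r| ≤ C * ((|z| * b) ^ r / Real.Gamma (α * r + 1)) := by
    intro z r
    rw [hv, abs_mul, abs_mul, abs_inv, abs_of_pos (hΓpos r), abs_pow, mul_pow]
    have h1 : |z| ^ r * ((Real.Gamma (α * r + 1))⁻¹ * |w r|)
        ≤ |z| ^ r * ((Real.Gamma (α * r + 1))⁻¹ * (C * b ^ r)) := by
      apply mul_le_mul_of_nonneg_left (mul_le_mul_of_nonneg_left (hw r) (by positivity))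
        (by positivity)
    calc |z| ^ r * ((Real.Gamma (α * r + 1))⁻¹ * |w r|)
        ≤ |z| ^ r * ((Real.Gamma (α * r + 1))⁻¹ * (C * b ^ r)) := h1
      _ = C * (|z| ^ r * b ^ r / Real.Gamma (α * r + 1)) := by ring
  have hsum : ∀ z : ℝ, Summable fun r : ℕ => z ^ r * v r := by
    intro z
    apply Summable.of_norm_bounded ((ml_summable hα (x := |z| * b) (by positivity)).mul_left C)
    intro r
    rw [Real.norm_eq_abs]
    exact hvb z r
  have hv0 : v 0 = w 0 := by
    rw [hv]; simp [Real.Gamma_one]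
  have hv1 : v 1 = (Real.Gamma (α + 1))⁻¹ * w 1 := by
    rw [hv]; norm_num
  -- summable of |v|
  have hvsum : Summable fun r => |v r| := by
    apply Summable.of_norm_bounded ((ml_summable hα (x := b) hb).mul_left C)
    intro r
    rw [Real.norm_eq_abs, abs_abs]
    have := hvb 1 r
    simpa using this
  set D : ℝ := ∑' r : ℕ, |v (r + 2)| with hD
  have hvsum2 : Summable fun r => |v (r + 2)| := by
    exact (summable_nat_add_iff 2).mpr hvsum
  have hD0 : 0 ≤ D := tsum_nonneg fun r => abs_nonneg _
  -- key identity
  have key : ∀ γ : ℝ, γ ≠ 0 →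
      γ⁻¹ * ((∑' r : ℕ, γ ^ r * v r) - w 0) - (Real.Gamma (α + 1))⁻¹ * w 1
        = γ * ∑' r : ℕ, γ ^ r * v (r + 2) := by
    intro γ hγ
    have hs1 : Summable fun r : ℕ => γ ^ (r + 1) * v (r + 1) :=
      (summable_nat_add_iff 1).mpr (hsum γ)
    have hs2 : Summable fun r : ℕ => γ ^ r * v (r + 1) := by
      have := hs1.mul_left γ⁻¹
      apply this.congr
      intro r
      field_simp
      ring
    have hs3 : Summable fun r : ℕ => γ ^ (r + 1) * v (r + 2) :=
      (summable_nat_add_iff 1).mpr hs2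
    have e1 : (∑' r : ℕ, γ ^ r * v r) = w 0 + ∑' r : ℕ, γ ^ (r + 1) * v (r + 1) := by
      rw [Summable.tsum_eq_zero_add (hsum γ)]
      simp [hv0]
    have e2 : γ⁻¹ * (∑' r : ℕ, γ ^ (r + 1) * v (r + 1)) = ∑' r : ℕ, γ ^ r * v (r + 1) := by
      rw [← tsum_mul_left]
      apply tsum_congr
      intro r
      rw [pow_succ']
      field_simp
    have e3 : (∑' r : ℕ, γ ^ r * v (r + 1))
        = v 1 + γ * ∑' r : ℕ, γ ^ r * v (r + 2) := by
      rw [Summable.tsum_eq_zero_add hs2, ← tsum_mul_left]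
      congr 1
      · simp
      · apply tsum_congr
        intro r
        rw [pow_succ']
        ring
    rw [e1]
    rw [show w 0 + (∑' r : ℕ, γ ^ (r + 1) * v (r + 1)) - w 0
        = ∑' r : ℕ, γ ^ (r + 1) * v (r + 1) by ring]
    rw [e2, e3, hv1]
    ring
  rw [← tendsto_sub_nhds_zero_iff]
  apply squeeze_zero_norm' (a := fun γ => γ * D)
  · filter_upwards [Ioc_mem_nhdsGT (show (0:ℝ) < 1 by norm_num)] with γ hγ
    rw [key γ (ne_of_gt hγ.1), Real.norm_eq_abs, abs_mul, abs_of_pos hγ.1]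
    apply mul_le_mul_of_nonneg_left _ hγ.1.le
    calc |∑' r : ℕ, γ ^ r * v (r + 2)| ≤ ∑' r : ℕ, |γ ^ r * v (r + 2)| := by
          simp only [← Real.norm_eq_abs]
          apply norm_tsum_le_tsum_norm
          apply hvsum2.of_nonneg_of_le (fun r => norm_nonneg _)
          intro r
          rw [Real.norm_eq_abs, abs_mul, abs_pow]
          have : |γ| ^ r ≤ 1 := by
            apply pow_le_one₀ (abs_nonneg _)
            rw [abs_of_pos hγ.1]; exact hγ.2
          nlinarith [abs_nonneg (v (r + 2))]
      _ ≤ D := by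
          apply Summable.tsum_le_tsum _ _ hvsum2
          · intro r
            rw [abs_mul, abs_pow]
            have h1 : |γ| ^ r ≤ 1 := by
              apply pow_le_one₀ (abs_nonneg _)
              rw [abs_of_pos hγ.1]; exact hγ.2
            nlinarith [abs_nonneg (v (r + 2))]
          · apply hvsum2.of_nonneg_of_le (fun r => abs_nonneg _)
            intro r
            rw [abs_mul, abs_pow]
            have h1 : |γ| ^ r ≤ 1 := by
              apply pow_le_one₀ (abs_nonneg _)
              rw [abs_of_pos hγ.1]; exact hγ.2
            nlinarith [abs_nonneg (v (r + 2))]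
  · have : Tendsto (fun γ : ℝ => γ * D) (nhds 0) (nhds 0) := by
      have := (continuous_id.mul (continuous_const (y := D))).tendsto (0:ℝ)
      simpa using (tendsto_id (x := nhds (0:ℝ))).mul_const D
    exact this.mono_left nhdsWithin_le_nhds

/-- Let α > 0 and A a real n×n matrix, 𝟏 the all-ones vector. Then the ML
total communicability vector t = E_α(γA)𝟏 satisfies
lim_{γ→0⁺} γ⁻¹ (E_α(γA)𝟏 − 𝟏) = Γ(α+1)⁻¹ · A𝟏, i.e. to first order in γ the ML total
communicability of node i is 1 + γ d_i / Γ(α+1), with d_i = (A𝟏)_i the degree of node i. -/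
theorem ml_total_communicability_first_order {n : ℕ} (α : ℝ) (hα : 0 < α)
    (A : Matrix (Fin n) (Fin n) ℝ) :
    Tendsto (fun γ : ℝ =>
        γ⁻¹ • ((∑' r : ℕ, (γ ^ r / Real.Gamma (α * r + 1)) • A ^ r).mulVec (fun _ => (1 : ℝ))
          - fun _ => (1 : ℝ)))
      (nhdsWithin 0 (Set.Ioi 0))
      (nhds ((Real.Gamma (α + 1))⁻¹ • A.mulVec fun _ => (1 : ℝ))) := by
  classical
  set b : ℝ := ∑ i, ∑ j, |A i j| with hbdef
  have hb0 : 0 ≤ b := by positivity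
  have hrow : ∀ i : Fin n, ∑ j, |A i j| ≤ b := by
    intro i
    exact Finset.single_le_sum (f := fun i => ∑ j, |A i j|)
      (fun i _ => by positivity) (Finset.mem_univ i)
  have hAe : ∀ (r : ℕ) (i j : Fin n), |(A ^ r) i j| ≤ b ^ r := by
    intro r
    induction r with
    | zero =>
      intro i j
      rw [pow_zero, pow_zero]
      rcases eq_or_ne i j with h | h
      · simp [Matrix.one_apply, h]
      · simp [Matrix.one_apply, h]
    | succ r ih =>
      intro i j
      rw [pow_succ', Matrix.mul_apply]
      calc |∑ k, A i k * (A ^ r) k j| ≤ ∑ k, |A i k * (A ^ r) k j| :=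
            Finset.abs_sum_le_sum_abs _ _
        _ ≤ ∑ k, |A i k| * b ^ r := by
            apply Finset.sum_le_sum
            intro k _
            rw [abs_mul]
            exact mul_le_mul_of_nonneg_left (ih k j) (abs_nonneg _)
        _ = (∑ k, |A i k|) * b ^ r := by rw [Finset.sum_mul]
        _ ≤ b * b ^ r := mul_le_mul_of_nonneg_right (hrow i) (by positivity)
        _ = b ^ (r + 1) := (pow_succ' b r).symm
  set u : ℕ → Fin n → ℝ := fun r => (A ^ r).mulVec (fun _ => (1:ℝ)) with hu
  have hue : ∀ (r : ℕ) (i : Fin n), u r i = ∑ j, (A ^ r) i j := by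
    intro r i; simp [hu, Matrix.mulVec, dotProduct]
  have hub : ∀ (r : ℕ) (i : Fin n), |u r i| ≤ (n : ℝ) * b ^ r := by
    intro r i
    rw [hue]
    calc |∑ j, (A ^ r) i j| ≤ ∑ j, |(A ^ r) i j| := Finset.abs_sum_le_sum_abs _ _
      _ ≤ ∑ _j : Fin n, b ^ r := Finset.sum_le_sum fun j _ => hAe r i j
      _ = (n:ℝ) * b ^ r := by simp [Finset.sum_const, nsmul_eq_mul]
  have hΓpos : ∀ r : ℕ, 0 < Real.Gamma (α * r + 1) := fun r =>
    Real.Gamma_pos_of_pos (by positivity)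
  have hentry : ∀ (γ : ℝ) (i j : Fin n),
      Summable fun r : ℕ => (γ ^ r / Real.Gamma (α * r + 1)) * (A ^ r) i j := by
    intro γ i j
    apply Summable.of_norm_bounded (ml_summable hα (x := |γ| * b) (by positivity))
    intro r
    rw [Real.norm_eq_abs, abs_mul, abs_div, abs_of_pos (hΓpos r), abs_pow, mul_pow,
      div_mul_eq_mul_div]
    gcongr
    exact hAe r i j
  have hMsum : ∀ γ : ℝ, Summable fun r : ℕ => (γ ^ r / Real.Gamma (α * r + 1)) • A ^ r := by
    intro γ
    apply Pi.summable.2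
    intro i
    apply Pi.summable.2
    intro j
    have := hentry γ i j
    apply this.congr
    intro r
    simp [Matrix.smul_apply, smul_eq_mul]
  have hF : ∀ (γ : ℝ) (i : Fin n),
      ((∑' r : ℕ, (γ ^ r / Real.Gamma (α * r + 1)) • A ^ r).mulVec (fun _ => (1:ℝ))) i
        = ∑' r : ℕ, γ ^ r * ((Real.Gamma (α * r + 1))⁻¹ * u r i) := by
    intro γ i
    have h1 : ∀ j, (∑' r : ℕ, (γ ^ r / Real.Gamma (α * r + 1)) • A ^ r) i j
        = ∑' r : ℕ, (γ ^ r / Real.Gamma (α * r + 1)) * (A ^ r) i j := by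
      intro j
      erw [tsum_apply (hMsum γ), tsum_apply (Pi.summable.1 (hMsum γ) i)]
      apply tsum_congr
      intro r
      simp [Matrix.smul_apply, smul_eq_mul]
    have h2 : ((∑' r : ℕ, (γ ^ r / Real.Gamma (α * r + 1)) • A ^ r).mulVec
        (fun _ => (1:ℝ))) i = ∑ j, (∑' r : ℕ, (γ ^ r / Real.Gamma (α * r + 1)) • A ^ r) i j := by
      simp [Matrix.mulVec, dotProduct]
    rw [h2]
    rw [Finset.sum_congr rfl fun j _ => h1 j]
    rw [← Summable.tsum_finsetSum (fun j _ => hentry γ i j)]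
    apply tsum_congr
    intro r
    rw [← Finset.mul_sum, ← hue, div_eq_mul_inv]
    ring
  rw [tendsto_pi_nhds]
  intro i
  have hsc := scalar_limit hα (fun r => u r i) n b hb0 (fun r => hub r i)
  have hu0 : u 0 i = 1 := by simp [hu, Matrix.one_mulVec]
  have hu1 : u 1 i = A.mulVec (fun _ => (1:ℝ)) i := by simp [hu]
  rw [hu0, hu1] at hsc
  have hgoal_val : ((Real.Gamma (α + 1))⁻¹ • A.mulVec fun _ => (1:ℝ)) i
      = (Real.Gamma (α + 1))⁻¹ * A.mulVec (fun _ => (1:ℝ)) i := rfl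
  rw [hgoal_val]
  apply Tendsto.congr _ hsc
  intro γ
  rw [← hF γ i]
  simp [Pi.smul_apply, Pi.sub_apply, smul_eq_mul]
end

section
/- Let A be a real m×n matrix and let 𝒜 be the (m+n)×(m+n) symmetric block matrix with zero diagonal blocks, upper-right block A, and lower-left block Aᵀ. Then the matrix exponential of 𝒜 has the block form: its (1,1) block equals Σ_{k=0}^∞ (AAᵀ)^k / (2k)!, its (2,2) block equals Σ_{k=0}^∞ (AᵀA)^k / (2k)!, its (1,2) block equals Σ_{k=0}^∞ (AAᵀ)^k A / (2k+1)!, and its (2,1) block equals Σ_{k=0}^∞ (AᵀA)^k Aᵀ / (2k+1)!. In particular, the diagonal blocks of exp(𝒜) are the matrix Mittag–Leffler functions E_{2,1}(AAᵀ) and E_{2,1}(AᵀA). -/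
set_option maxHeartbeats 2000000


open scoped Matrix

/-- `submatrix` as a continuous linear map. -/
private def subCLM (α β α' β' : Type*) (f : α' → α) (g : β' → β) :
    Matrix α β ℝ →L[ℝ] Matrix α' β' ℝ where
  toFun M := M.submatrix f g
  map_add' M N := rfl
  map_smul' c M := rfl
  cont := by
    apply continuous_pi; intro i; apply continuous_pi; intro j
    exact (continuous_apply (g j)).comp (continuous_apply (f i))

/-- Let A be a real m×n matrix and 𝒜 = [[0, A],[Aᵀ, 0]] the symmetric
bipartite block matrix. Then exp(𝒜) has blocks:
(1,1) block Σ_k (AAᵀ)^k/(2k)! = E_{2,1}(AAᵀ), (2,2) block Σ_k (AᵀA)^k/(2k)! = E_{2,1}(AᵀA),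
(1,2) block Σ_k (AAᵀ)^k A/(2k+1)!, and (2,1) block Σ_k (AᵀA)^k Aᵀ/(2k+1)!. -/
theorem exp_bipartite_blocks {m n : ℕ} (A : Matrix (Fin m) (Fin n) ℝ) :
    (NormedSpace.exp (Matrix.fromBlocks (0 : Matrix (Fin m) (Fin m) ℝ) A Aᵀ
        (0 : Matrix (Fin n) (Fin n) ℝ))).toBlocks₁₁ =
        ∑' k : ℕ, (((2 * k).factorial : ℝ))⁻¹ • (A * Aᵀ) ^ k ∧
    (NormedSpace.exp (Matrix.fromBlocks (0 : Matrix (Fin m) (Fin m) ℝ) A Aᵀ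
        (0 : Matrix (Fin n) (Fin n) ℝ))).toBlocks₂₂ =
        ∑' k : ℕ, (((2 * k).factorial : ℝ))⁻¹ • (Aᵀ * A) ^ k ∧
    (NormedSpace.exp (Matrix.fromBlocks (0 : Matrix (Fin m) (Fin m) ℝ) A Aᵀ
        (0 : Matrix (Fin n) (Fin n) ℝ))).toBlocks₁₂ =
        ∑' k : ℕ, (((2 * k + 1).factorial : ℝ))⁻¹ • ((A * Aᵀ) ^ k * A) ∧
    (NormedSpace.exp (Matrix.fromBlocks (0 : Matrix (Fin m) (Fin m) ℝ) A Aᵀ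
        (0 : Matrix (Fin n) (Fin n) ℝ))).toBlocks₂₁ =
        ∑' k : ℕ, (((2 * k + 1).factorial : ℝ))⁻¹ • ((Aᵀ * A) ^ k * Aᵀ) := by
  letI : NormedRing (Matrix (Fin m ⊕ Fin n) (Fin m ⊕ Fin n) ℝ) := Matrix.linftyOpNormedRing
  letI : NormedAlgebra ℝ (Matrix (Fin m ⊕ Fin n) (Fin m ⊕ Fin n) ℝ) :=
    Matrix.linftyOpNormedAlgebra
  set B : Matrix (Fin m ⊕ Fin n) (Fin m ⊕ Fin n) ℝ := Matrix.fromBlocks 0 A Aᵀ 0 with hB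
  have hsq : B * B = Matrix.fromBlocks (A * Aᵀ) 0 0 (Aᵀ * A) := by
    rw [hB, Matrix.fromBlocks_multiply]; simp
  have heven : ∀ k : ℕ, B ^ (2 * k) = Matrix.fromBlocks ((A * Aᵀ) ^ k) 0 0 ((Aᵀ * A) ^ k) := by
    intro k
    induction k with
    | zero => simp [Matrix.fromBlocks_one]
    | succ k ih =>
      have h2 : 2 * (k + 1) = 2 * k + 2 := by ring
      rw [h2, pow_add, ih, pow_two, hsq, Matrix.fromBlocks_multiply]
      simp [pow_succ]
  have hodd : ∀ k : ℕ, B ^ (2 * k + 1) =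
      Matrix.fromBlocks 0 ((A * Aᵀ) ^ k * A) ((Aᵀ * A) ^ k * Aᵀ) 0 := by
    intro k
    rw [pow_succ, heven k, hB, Matrix.fromBlocks_multiply]
    simp
  have hsum : Summable fun r : ℕ => ((r.factorial : ℝ))⁻¹ • B ^ r :=
    NormedSpace.expSeries_summable' (𝕂 := ℝ) B
  have hexp : NormedSpace.exp B = ∑' r : ℕ, ((r.factorial : ℝ))⁻¹ • B ^ r :=
    congrFun (NormedSpace.exp_eq_tsum ℝ) B
  -- generic block extraction
  have key : ∀ (α' β' : Type) (_ : Fintype α') (_ : Fintype β')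
      (f : α' → Fin m ⊕ Fin n) (g : β' → Fin m ⊕ Fin n),
      (NormedSpace.exp B).submatrix f g =
        (∑' k : ℕ, ((((2 * k).factorial : ℝ))⁻¹ • B ^ (2 * k)).submatrix f g) +
        (∑' k : ℕ, ((((2 * k + 1).factorial : ℝ))⁻¹ • B ^ (2 * k + 1)).submatrix f g) := by
    intro α' β' _ _ f g
    have hmap := (subCLM _ _ α' β' f g).map_tsum hsum
    have hs' : Summable fun r : ℕ => (((r.factorial : ℝ))⁻¹ • B ^ r).submatrix f g :=
      hsum.map (subCLM _ _ α' β' f g).toLinearMap.toAddMonoidHom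
        (subCLM _ _ α' β' f g).continuous
    have he : Summable fun k : ℕ => ((((2 * k).factorial : ℝ))⁻¹ • B ^ (2 * k)).submatrix f g :=
      hs'.comp_injective fun a b h => by omega
    have ho : Summable fun k : ℕ =>
        ((((2 * k + 1).factorial : ℝ))⁻¹ • B ^ (2 * k + 1)).submatrix f g :=
      hs'.comp_injective fun a b h => by omega
    rw [hexp]
    exact hmap.trans (tsum_even_add_odd he ho).symm
  have h11 := key (Fin m) (Fin m) inferInstance inferInstance Sum.inl Sum.inl
  have h22 := key (Fin n) (Fin n) inferInstance inferInstance Sum.inr Sum.inr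
  have h12 := key (Fin m) (Fin n) inferInstance inferInstance Sum.inl Sum.inr
  have h21 := key (Fin n) (Fin m) inferInstance inferInstance Sum.inr Sum.inl
  refine ⟨?_, ?_, ?_, ?_⟩
  · show (NormedSpace.exp B).submatrix Sum.inl Sum.inl = _
    rw [h11]
    have : ∀ k : ℕ, ((((2 * k + 1).factorial : ℝ))⁻¹ •
        B ^ (2 * k + 1)).submatrix Sum.inl (Sum.inl : Fin m → Fin m ⊕ Fin n) = 0 := by
      intro k; ext i j; simp [hodd k, Matrix.fromBlocks]
    simp only [this, tsum_zero, add_zero]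
    congr 1; ext k i j
    simp [heven k, Matrix.fromBlocks]
  · show (NormedSpace.exp B).submatrix Sum.inr Sum.inr = _
    rw [h22]
    have : ∀ k : ℕ, ((((2 * k + 1).factorial : ℝ))⁻¹ •
        B ^ (2 * k + 1)).submatrix Sum.inr (Sum.inr : Fin n → Fin m ⊕ Fin n) = 0 := by
      intro k; ext i j; simp [hodd k, Matrix.fromBlocks]
    simp only [this, tsum_zero, add_zero]
    congr 1; ext k i j
    simp [heven k, Matrix.fromBlocks]
  · show (NormedSpace.exp B).submatrix Sum.inl Sum.inr = _
    rw [h12]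
    have : ∀ k : ℕ, ((((2 * k).factorial : ℝ))⁻¹ •
        B ^ (2 * k)).submatrix Sum.inl (Sum.inr : Fin n → Fin m ⊕ Fin n) = 0 := by
      intro k; ext i j; simp [heven k, Matrix.fromBlocks]
    simp only [this, tsum_zero, zero_add]
    congr 1; ext k i j
    simp [hodd k, Matrix.fromBlocks]
  · show (NormedSpace.exp B).submatrix Sum.inr Sum.inl = _
    rw [h21]
    have : ∀ k : ℕ, ((((2 * k).factorial : ℝ))⁻¹ •
        B ^ (2 * k)).submatrix Sum.inr (Sum.inl : Fin m → Fin m ⊕ Fin n) = 0 := by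
      intro k; ext i j; simp [heven k, Matrix.fromBlocks]
    simp only [this, tsum_zero, zero_add]
    congr 1; ext k i j
    simp [hodd k, Matrix.fromBlocks]
end

section
/- For every real x, the generating function of walk counts weighted by inverse double factorials satisfies Σ_{r=0}^∞ x^r / r!! = e^{x²/2} ( 1 + ∫₀ˣ e^{−t²/2} dt ), equivalently Σ_{r=0}^∞ x^r / r!! = (1/2) [ √(2π) · erf(x/√2) + 2 ] · e^{x²/2}. -/
open Filter intervalIntegral

lemma dfac_succ (k : ℕ) : (2*k+1).doubleFactorial = (2*k+1) * (2*k-1).doubleFactorial := by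
  cases k with
  | zero => decide
  | succ n =>
    have h1 : 2*(n+1)+1 = (2*n+1)+2 := by omega
    have h2 : 2*(n+1)-1 = 2*n+1 := by omega
    rw [h1, h2, Nat.doubleFactorial_add_two]

lemma fac_le_dfac (n : ℕ) : Nat.factorial n ≤ (2*n-1).doubleFactorial := by
  induction n with
  | zero => decide
  | succ m ih =>
    have h2 : 2*(m+1)-1 = 2*m+1 := by omega
    rw [h2, dfac_succ, Nat.factorial_succ]
    exact Nat.mul_le_mul (by omega) ih

lemma even_tsum (x : ℝ) : ∑' k : ℕ, x^(2*k) / (((2*k).doubleFactorial : ℝ)) = Real.exp (x^2/2) := by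
  have h : ∀ k : ℕ, x^(2*k) / (((2*k).doubleFactorial : ℝ)) = (x^2/2)^k / (Nat.factorial k) := by
    intro k
    rw [Nat.doubleFactorial_two_mul]
    push_cast
    rw [div_pow, pow_mul]
    ring
  simp only [h]
  rw [Real.exp_eq_exp_ℝ, NormedSpace.exp_eq_tsum_div]

lemma summable_even (x : ℝ) : Summable (fun k : ℕ => x^(2*k) / (((2*k).doubleFactorial : ℝ))) := by
  have h : ∀ k : ℕ, x^(2*k) / (((2*k).doubleFactorial : ℝ)) = (x^2/2)^k / (Nat.factorial k) := by
    intro k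
    rw [Nat.doubleFactorial_two_mul]; push_cast; rw [div_pow, pow_mul]; ring
  simpa only [h] using Real.summable_pow_div_factorial (x^2/2)

lemma summable_odd (x : ℝ) : Summable (fun k : ℕ => x^(2*k+1) / (((2*k+1).doubleFactorial : ℝ))) := by
  apply Summable.of_norm_bounded (g := fun k => |x| * ((x^2)^k / (Nat.factorial k)))
  · exact (Real.summable_pow_div_factorial (x^2)).mul_left _
  · intro k
    have hd : (Nat.factorial k : ℝ) ≤ ((2*k+1).doubleFactorial : ℝ) := by
      exact_mod_cast le_trans (fac_le_dfac k) (by rw [dfac_succ]; exact Nat.le_mul_of_pos_left _ (by omega))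
    have hdpos : (0:ℝ) < ((2*k+1).doubleFactorial : ℝ) := by
      exact_mod_cast Nat.doubleFactorial_pos _
    rw [norm_div, Real.norm_natCast]
    calc ‖x^(2*k+1)‖ / (((2*k+1).doubleFactorial : ℝ))
        ≤ ‖x^(2*k+1)‖ / (Nat.factorial k : ℝ) := by
          apply div_le_div_of_nonneg_left (norm_nonneg _) _ hd
          exact_mod_cast Nat.factorial_pos k
      _ = |x| * ((x^2)^k / (Nat.factorial k)) := by
          rw [norm_pow, Real.norm_eq_abs, pow_succ, pow_mul, sq_abs]
          ring

lemma key (n : ℕ) (x : ℝ) :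
    Real.exp (-x^2/2) * ∑ k ∈ Finset.range n, x^(2*k+1) / (((2*k+1).doubleFactorial : ℝ))
      = ∫ t in (0:ℝ)..x, Real.exp (-t^2/2) * (1 - t^(2*n) / (((2*n-1).doubleFactorial : ℝ))) := by
  set F : ℝ → ℝ := fun t => Real.exp (-t^2/2) * ∑ k ∈ Finset.range n, t^(2*k+1) / (((2*k+1).doubleFactorial : ℝ)) with hF
  have hderiv : ∀ t : ℝ, HasDerivAt F (Real.exp (-t^2/2) * (1 - t^(2*n) / (((2*n-1).doubleFactorial : ℝ)))) t := by
    intro t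
    have hE : HasDerivAt (fun t : ℝ => Real.exp (-t^2/2)) (Real.exp (-t^2/2) * (-t)) t := by
      have h1 : HasDerivAt (fun t : ℝ => -t^2/2) (-t) t := by
        have h := ((hasDerivAt_pow 2 t).neg.div_const 2)
        exact h.congr_deriv (by push_cast; ring)
      exact h1.exp
    have hS : HasDerivAt (fun t : ℝ => ∑ k ∈ Finset.range n, t^(2*k+1) / (((2*k+1).doubleFactorial : ℝ)))
        (∑ k ∈ Finset.range n, ((2*k+1 : ℝ) * t^(2*k) / (((2*k+1).doubleFactorial : ℝ)))) t := by
      apply HasDerivAt.fun_sum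
      intro k _
      have := (hasDerivAt_pow (2*k+1) t).div_const (((2*k+1).doubleFactorial : ℝ))
      simpa using this
    have := hE.mul hS
    refine this.congr_deriv ?_
    symm
    set S := ∑ k ∈ Finset.range n, t^(2*k+1) / (((2*k+1).doubleFactorial : ℝ))
    set u : ℕ → ℝ := fun k => t^(2*k) / (((2*k-1).doubleFactorial : ℝ)) with hu
    have hterm : ∀ k ∈ Finset.range n,
        (2*k+1 : ℝ) * t^(2*k) / (((2*k+1).doubleFactorial : ℝ)) - t * (t^(2*k+1) / (((2*k+1).doubleFactorial : ℝ)))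
        = u k - u (k+1) := by
      intro k _
      have hc : (((2*k+1).doubleFactorial : ℝ)) = (2*k+1 : ℝ) * (((2*k-1).doubleFactorial : ℝ)) := by
        exact_mod_cast congrArg (Nat.cast : ℕ → ℝ) (dfac_succ k)
      have hknz : (2*k+1 : ℝ) ≠ 0 := by positivity
      have hdnz : (((2*k-1).doubleFactorial : ℝ)) ≠ 0 := by
        exact_mod_cast (Nat.doubleFactorial_pos _).ne'
      have h2 : 2*(k+1)-1 = 2*k+1 := by omega
      simp only [hu, h2]
      rw [hc]
      field_simp
      try ring
    have hsum : ∑ k ∈ Finset.range n, ((2*k+1 : ℝ) * t^(2*k) / (((2*k+1).doubleFactorial : ℝ))) - t * S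
        = u 0 - u n := by
      rw [← Finset.sum_range_sub' u, Finset.mul_sum, ← Finset.sum_sub_distrib]
      exact Finset.sum_congr rfl hterm
    have hu0 : u 0 = 1 := by simp [hu]
    calc Real.exp (-t^2/2) * (1 - t^(2*n) / (((2*n-1).doubleFactorial : ℝ)))
        = Real.exp (-t^2/2) * (u 0 - u n) := by rw [hu0]
      _ = Real.exp (-t^2/2) * (∑ k ∈ Finset.range n, ((2*k+1 : ℝ) * t^(2*k) / (((2*k+1).doubleFactorial : ℝ))) - t * S) := by rw [hsum]
      _ = Real.exp (-t^2/2) * (-t) * S + Real.exp (-t^2/2) * ∑ k ∈ Finset.range n, ((2*k+1 : ℝ) * t^(2*k) / (((2*k+1).doubleFactorial : ℝ))) := by ring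
  have hcont : Continuous (fun t : ℝ => Real.exp (-t^2/2) * (1 - t^(2*n) / (((2*n-1).doubleFactorial : ℝ)))) := by
    fun_prop
  have hint := intervalIntegral.integral_eq_sub_of_hasDerivAt
    (fun t _ => hderiv t) (hcont.intervalIntegrable 0 x)
  have hF0 : F 0 = 0 := by
    simp [hF]
  rw [hint, hF0, sub_zero]

lemma odd_tsum (x : ℝ) :
    ∑' k : ℕ, x^(2*k+1) / (((2*k+1).doubleFactorial : ℝ))
      = Real.exp (x^2/2) * ∫ t in (0:ℝ)..x, Real.exp (-t^2/2) := by
  set I : ℝ := ∫ t in (0:ℝ)..x, Real.exp (-t^2/2) with hI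
  set R : ℕ → ℝ := fun n => ∫ t in (0:ℝ)..x, Real.exp (-t^2/2) * (t^(2*n) / (((2*n-1).doubleFactorial : ℝ))) with hR
  -- rewrite key as S_n = exp(x²/2) * (I - R n)
  have hExp : Continuous (fun t : ℝ => Real.exp (-t^2/2)) := by fun_prop
  have hkey2 : ∀ n : ℕ, ∑ k ∈ Finset.range n, x^(2*k+1) / (((2*k+1).doubleFactorial : ℝ))
      = Real.exp (x^2/2) * (I - R n) := by
    intro n
    have h1 := key n x
    have hsplit : (∫ t in (0:ℝ)..x, Real.exp (-t^2/2) * (1 - t^(2*n) / (((2*n-1).doubleFactorial : ℝ))))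
        = I - R n := by
      rw [hI, hR]
      rw [← intervalIntegral.integral_sub (hExp.intervalIntegrable 0 x)
        ((by fun_prop : Continuous (fun t : ℝ => Real.exp (-t^2/2) * (t^(2*n) / (((2*n-1).doubleFactorial : ℝ))))).intervalIntegrable 0 x)]
      congr 1
      ext t
      ring
    rw [hsplit] at h1
    have hne : Real.exp (-x^2/2) ≠ 0 := Real.exp_ne_zero _
    have : Real.exp (x^2/2) * Real.exp (-x^2/2) = 1 := by
      rw [← Real.exp_add, ← Real.exp_zero]; ring_nf
    calc ∑ k ∈ Finset.range n, x^(2*k+1) / (((2*k+1).doubleFactorial : ℝ))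
        = Real.exp (x^2/2) * (Real.exp (-x^2/2) * ∑ k ∈ Finset.range n, x^(2*k+1) / (((2*k+1).doubleFactorial : ℝ))) := by
          rw [← mul_assoc, this, one_mul]
      _ = Real.exp (x^2/2) * (I - R n) := by rw [h1]
  -- R n → 0
  have hRlim : Tendsto R atTop (nhds 0) := by
    have hg : Tendsto (fun n : ℕ => ((x^2)^n / (Nat.factorial n)) * |x|) atTop (nhds 0) := by
      have h0 := (Real.summable_pow_div_factorial (x^2)).tendsto_atTop_zero
      simpa using h0.mul_const (|x|)
    refine squeeze_zero_norm ?_ hg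
    intro n
    have hdpos : (0:ℝ) < ((2*n-1).doubleFactorial : ℝ) := by
      exact_mod_cast Nat.doubleFactorial_pos _
    have hbound : ∀ t ∈ Set.uIoc (0:ℝ) x,
        ‖Real.exp (-t^2/2) * (t^(2*n) / (((2*n-1).doubleFactorial : ℝ)))‖ ≤ (x^2)^n / (Nat.factorial n) := by
      intro t ht
      have htx : |t| ≤ |x| := by
        rcases ht with ⟨h1, h2⟩
        rw [abs_le]
        constructor
        · calc -|x| ≤ min 0 x := le_min (neg_nonpos.2 (abs_nonneg x)) (neg_abs_le x)
            _ ≤ t := le_of_lt h1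
        · exact h2.trans (le_trans (max_le (abs_nonneg x) (le_abs_self x)) le_rfl)
      have hexp : Real.exp (-t^2/2) ≤ 1 := by
        rw [Real.exp_le_one_iff]
        nlinarith [sq_nonneg t]
      have hfac : (Nat.factorial n : ℝ) ≤ ((2*n-1).doubleFactorial : ℝ) := by
        exact_mod_cast fac_le_dfac n
      rw [norm_mul, norm_div, Real.norm_natCast]
      calc ‖Real.exp (-t^2/2)‖ * (‖t^(2*n)‖ / (((2*n-1).doubleFactorial : ℝ)))
          ≤ 1 * (‖t^(2*n)‖ / (((2*n-1).doubleFactorial : ℝ))) := by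
            apply mul_le_mul_of_nonneg_right _ (by positivity)
            rw [Real.norm_eq_abs, abs_of_pos (Real.exp_pos _)]
            exact hexp
        _ = |t|^(2*n) / (((2*n-1).doubleFactorial : ℝ)) := by rw [one_mul, norm_pow, Real.norm_eq_abs]
        _ ≤ |x|^(2*n) / (Nat.factorial n : ℝ) := by
            apply div_le_div₀ (by positivity) (pow_le_pow_left₀ (abs_nonneg t) htx _)
              (by exact_mod_cast Nat.factorial_pos n) hfac
        _ = (x^2)^n / (Nat.factorial n : ℝ) := by
            rw [pow_mul, sq_abs]
    have := intervalIntegral.norm_integral_le_of_norm_le_const hbound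
    simpa using this
  have hpart := (summable_odd x).hasSum.tendsto_sum_nat
  have hlim : Tendsto (fun n => Real.exp (x^2/2) * (I - R n)) atTop
      (nhds (Real.exp (x^2/2) * I)) := by
    have := ((tendsto_const_nhds (x := I)).sub hRlim).const_mul (Real.exp (x^2/2))
    simpa using this
  have := hpart.congr (fun n => (hkey2 n))
  exact tendsto_nhds_unique this hlim

/-- For every real x, Σ_{r} x^r / r‼ = e^{x²/2} (1 + ∫₀ˣ e^{−t²/2} dt),
equivalently Σ_{r} x^r / r‼ = (1/2) [ √(2π) erf(x/√2) + 2 ] e^{x²/2},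
where erf(y) = (2/√π) ∫₀ʸ e^{−t²} dt and r‼ is the double factorial. -/
theorem double_factorial_generating_function (x : ℝ) :
    (∑' r : ℕ, x ^ r / (r.doubleFactorial : ℝ) =
        Real.exp (x ^ 2 / 2) * (1 + ∫ t in (0 : ℝ)..x, Real.exp (-t ^ 2 / 2))) ∧
      ∑' r : ℕ, x ^ r / (r.doubleFactorial : ℝ) =
        (1 / 2) * (Real.sqrt (2 * Real.pi) *
            ((2 / Real.sqrt Real.pi) * ∫ t in (0 : ℝ)..(x / Real.sqrt 2), Real.exp (-t ^ 2)) + 2) *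
          Real.exp (x ^ 2 / 2) := by
  have h1 : ∑' r : ℕ, x ^ r / (r.doubleFactorial : ℝ) =
      Real.exp (x ^ 2 / 2) * (1 + ∫ t in (0 : ℝ)..x, Real.exp (-t ^ 2 / 2)) := by
    have ht := tsum_even_add_odd (f := fun r : ℕ => x ^ r / (r.doubleFactorial : ℝ))
      (summable_even x) (summable_odd x)
    rw [← ht, even_tsum x, odd_tsum x]
    ring
  refine ⟨h1, ?_⟩
  rw [h1]
  have hs2 : (0:ℝ) < Real.sqrt 2 := Real.sqrt_pos.2 (by norm_num)
  have hsp : (0:ℝ) < Real.sqrt Real.pi := Real.sqrt_pos.2 Real.pi_pos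
  have hsub : (∫ t in (0:ℝ)..x, Real.exp (-t^2/2))
      = Real.sqrt 2 * ∫ t in (0:ℝ)..(x / Real.sqrt 2), Real.exp (-t^2) := by
    have h := intervalIntegral.integral_comp_div (a := (0:ℝ)) (b := x)
      (fun u : ℝ => Real.exp (-u^2)) (ne_of_gt hs2)
    have heq : ∀ t : ℝ, Real.exp (-(t / Real.sqrt 2)^2) = Real.exp (-t^2/2) := by
      intro t
      congr 1
      rw [div_pow, Real.sq_sqrt (by norm_num : (2:ℝ) ≥ 0)]
      ring
    simp only [heq] at h
    rw [h]
    simp [smul_eq_mul, zero_div]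
  rw [hsub]
  have hsqrt2pi : Real.sqrt (2 * Real.pi) = Real.sqrt 2 * Real.sqrt Real.pi :=
    Real.sqrt_mul (by norm_num) _
  rw [hsqrt2pi]
  field_simp
  ring
end
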